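/- Let x₀ ∈ ℂⁿ and let Ψ be holomorphic on an open neighborhood of (x₀, conj x₀) in ℂⁿ × ℂⁿ such that the ℂ-bilinear form (ξ,η) ↦ D²Ψ(x₀, conj x₀)((ξ,0),(0,η)) is nondegenerate. Define φ(y, x̃; x, ỹ) := Ψ(x, ỹ) − Ψ(x, x̃) − Ψ(y, ỹ) + Ψ(y, x̃). Then there exists an open neighborhood N of (x₀, conj x₀, x₀, conj x₀) in ℂ^{4n} such that for all (y, x̃, x, ỹ) ∈ N: the partial complex derivatives D_xφ(y, x̃; x, ỹ) and D_ỹφ(y, x̃; x, ỹ) both vanish if and only if x = y and ỹ = x̃; moreover φ(y, x̃; y, x̃) = 0, i.e. the unique critical point of (x,ỹ) ↦ φ(y,x̃;x,ỹ) is (y, x̃), with critical value 0. -/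

import Mathlib

/-!
A holomorphic function of several variables is `C^∞`: its directional derivatives are given by
Cauchy's formula on complex lines, `∂ᵥf(z) = (2πi)⁻¹ ∮ f(z + ζv) / ζ² dζ`, and the uniform Cauchy
estimate for `Df` lets one differentiate under the integral sign.

Fix `(y, x̃)`. The equations `D_xφ = 0` and `D_ỹφ = 0` say `∂ₓΨ(x, ỹ) = ∂ₓΨ(x, x̃)` and
`∂_ỹΨ(x, ỹ) = ∂_ỹΨ(y, ỹ)`. The maps `(x, ỹ) ↦ (x, ∂ₓΨ(x, ỹ))` and `(x, ỹ) ↦ (ỹ, ∂_ỹΨ(x, ỹ))`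
have injective differentials at `(x₀, x̄₀)`: this is the nondegeneracy of the mixed Hessian,
on the right resp. on the left. Hence they are injective near `(x₀, x̄₀)`, which forces
`ỹ = x̃` and `x = y`.
-/

open Complex

noncomputable section

/-- `ℂⁿ` with its Euclidean (Hermitian) norm. -/
abbrev En (n : ℕ) := EuclideanSpace ℂ (Fin n)

/-- Componentwise complex conjugation on `ℂⁿ`. -/
def conjV (n : ℕ) (x : En n) : En n :=
  (WithLp.equiv 2 (Fin n → ℂ)).symm fun j => (starRingEnd ℂ) (x j)

/-- The phase `φ(y, x̃; x, ỹ) = Ψ(x,ỹ) − Ψ(x,x̃) − Ψ(y,ỹ) + Ψ(y,x̃)`. -/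
def phiF (n : ℕ) (Ψ : En n × En n → ℂ) (y xt x yt : En n) : ℂ :=
  Ψ (x, yt) - Ψ (x, xt) - Ψ (y, yt) + Ψ (y, xt)

open Set Filter Topology Metric ContinuousLinearMap Function Real

section Holomorphic
variable {E F : Type*} [NormedAddCommGroup E] [NormedSpace ℂ E]
  [NormedAddCommGroup F] [NormedSpace ℂ F] {f : E → F}

theorem DifferentiableAt.hasDerivAt_comp_add_smul {z : E} (hf : DifferentiableAt ℂ f z) (v : E) :
    HasDerivAt (fun ζ : ℂ => f (z + ζ • v)) (fderiv ℂ f z v) 0 := by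
  have hline : HasDerivAt (fun ζ : ℂ => z + ζ • v) v 0 := by
    simpa using ((hasDerivAt_id (0 : ℂ)).smul_const v).const_add z
  exact hf.hasFDerivAt.comp_hasDerivAt_of_eq (x := 0) hline (by simp)

theorem norm_fderiv_le_of_forall_mem_closedBall_norm_le {z : E} {r M : ℝ} (hr : 0 < r)
    (hf : DifferentiableOn ℂ f (closedBall z r)) (hM : ∀ w ∈ closedBall z r, ‖f w‖ ≤ M) :
    ‖fderiv ℂ f z‖ ≤ M / r := by
  have hM₀ : 0 ≤ M := (norm_nonneg _).trans (hM z (mem_closedBall_self hr.le))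
  refine opNorm_le_bound _ (by positivity) fun v => ?_
  rcases eq_or_ne v 0 with rfl | hv
  · simp
  have hv' : 0 < ‖v‖ := norm_pos_iff.2 hv
  have hline : MapsTo (fun ζ : ℂ => z + ζ • v) (closedBall 0 (r / ‖v‖)) (closedBall z r) := by
    intro ζ hζ
    rw [mem_closedBall_zero_iff, le_div_iff₀ hv'] at hζ
    simpa [norm_smul] using hζ
  have hslice : DifferentiableOn ℂ (fun ζ : ℂ => f (z + ζ • v)) (closedBall 0 (r / ‖v‖)) :=
    hf.comp (by fun_prop : Differentiable ℂ fun ζ : ℂ => z + ζ • v).differentiableOn hline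
  have hcauchy := norm_deriv_le_of_forall_mem_sphere_norm_le (by positivity)
    (hslice.diffContOnCl_ball subset_rfl) fun ζ hζ => hM _ (hline (sphere_subset_closedBall hζ))
  rwa [((hf.differentiableAt (closedBall_mem_nhds z hr)).hasDerivAt_comp_add_smul v).deriv,
    div_div_eq_mul_div, mul_div_right_comm] at hcauchy

theorem fderiv_apply_eq_cderiv [CompleteSpace F] {U : Set E} (hU : IsOpen U)
    (hf : DifferentiableOn ℂ f U) {z v : E} {r : ℝ} (hr : 0 < r)
    (hzv : ∀ ζ ∈ closedBall (0 : ℂ) r, z + ζ • v ∈ U) :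
    fderiv ℂ f z v = cderiv r (fun ζ => f (z + ζ • v)) 0 := by
  have hslice : DifferentiableOn ℂ (fun ζ : ℂ => f (z + ζ • v)) ((z + · • v) ⁻¹' U) :=
    hf.comp (by fun_prop) (mapsTo_preimage _ _)
  have hz : z ∈ U := by simpa using hzv 0 (mem_closedBall_self hr.le)
  rw [cderiv_eq_deriv (hU.preimage (by fun_prop)) hslice hr hzv,
    ((hf.differentiableAt (hU.mem_nhds hz)).hasDerivAt_comp_add_smul v).deriv]

theorem hasFDerivAt_intervalIntegral_smul_comp_add [CompleteSpace F] [SecondCountableTopology F]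
    [FiniteDimensional ℂ E] {c : ℝ → ℂ} {γ : ℝ → E} (hc : Continuous c) (hγ : Continuous γ)
    {z₁ : E} {δ C : ℝ} (hδ : 0 < δ) (hf : ∀ z ∈ ball z₁ δ, ∀ θ, DifferentiableAt ℂ f (z + γ θ))
    (hC : ∀ z ∈ ball z₁ δ, ∀ θ, ‖fderiv ℂ f (z + γ θ)‖ ≤ C) (a b : ℝ) :
    HasFDerivAt (fun z => ∫ θ in a..b, c θ • f (z + γ θ))
      (∫ θ in a..b, c θ • fderiv ℂ f (z₁ + γ θ)) z₁ := by
  borelize E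
  have hcont : ∀ z ∈ ball z₁ δ, Continuous fun θ => c θ • f (z + γ θ) := fun z hz =>
    hc.smul (continuous_iff_continuousAt.2 fun θ =>
      ContinuousAt.comp (f := (z + γ ·)) (hf z hz θ).continuousAt (by fun_prop))
  refine intervalIntegral.hasFDerivAt_integral_of_dominated_of_fderiv_le (ball_mem_nhds z₁ hδ)
    (𝕜 := ℂ) (μ := MeasureTheory.volume) (F := fun z θ => c θ • f (z + γ θ))
    (F' := fun z θ => c θ • fderiv ℂ f (z + γ θ)) (bound := fun θ => ‖c θ‖ * C) ?_
    ((hcont z₁ (mem_ball_self hδ)).intervalIntegrable _ _) ?_ ?_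
    ((by fun_prop : Continuous fun θ => ‖c θ‖ * C).intervalIntegrable _ _) ?_
  · filter_upwards [ball_mem_nhds z₁ hδ] with z hz
    exact (hcont z hz).aestronglyMeasurable
  · exact hc.aestronglyMeasurable.smul
      ((measurable_fderiv ℂ f).comp (continuous_const.add hγ).measurable).aestronglyMeasurable
  · refine .of_forall fun θ _ z hz => ?_
    rw [norm_smul]
    exact mul_le_mul_of_nonneg_left (hC z hz θ) (norm_nonneg _)
  · refine .of_forall fun θ _ z hz => ?_
    exact ((hf z hz θ).hasFDerivAt.comp z ((hasFDerivAt_id z).add_const (γ θ))).const_smul (c θ)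

theorem differentiableAt_cderiv_comp_add_smul [CompleteSpace F] [SecondCountableTopology F]
    [FiniteDimensional ℂ E] {z₁ v : E} {r δ C : ℝ} (hr : 0 < r) (hδ : 0 < δ)
    (hf : ∀ z ∈ ball z₁ δ, ∀ ζ ∈ sphere (0 : ℂ) r, DifferentiableAt ℂ f (z + ζ • v))
    (hC : ∀ z ∈ ball z₁ δ, ∀ ζ ∈ sphere (0 : ℂ) r, ‖fderiv ℂ f (z + ζ • v)‖ ≤ C) :
    DifferentiableAt ℂ (fun z => cderiv r (fun ζ => f (z + ζ • v)) 0) z₁ := by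
  have hcirc : ∀ θ, circleMap 0 r θ ∈ sphere (0 : ℂ) r := fun θ =>
    circleMap_mem_sphere 0 hr.le θ
  have hc : Continuous fun θ => deriv (circleMap 0 r) θ * ((circleMap 0 r θ - 0) ^ 2)⁻¹ := by
    have hne : ∀ θ, circleMap 0 r θ - 0 ≠ 0 := fun θ => sub_ne_zero.2 (circleMap_ne_center hr.ne')
    simp only [deriv_circleMap]
    fun_prop (disch := exact fun θ => pow_ne_zero 2 (hne θ))
  have hint := hasFDerivAt_intervalIntegral_smul_comp_add hc (by fun_prop) hδ
    (fun z hz θ => hf z hz _ (hcirc θ)) (fun z hz θ => hC z hz _ (hcirc θ)) 0 (2 * π)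
  convert hint.differentiableAt.const_smul (2 * π * I : ℂ)⁻¹ using 1
  ext z
  simp only [cderiv, circleIntegral, mul_smul, Pi.smul_apply]

theorem DifferentiableOn.fderiv_apply [CompleteSpace F] [SecondCountableTopology F]
    [FiniteDimensional ℂ E] {U : Set E} (hf : DifferentiableOn ℂ f U) (hU : IsOpen U) (v : E) :
    DifferentiableOn ℂ (fun z => fderiv ℂ f z v) U := by
  intro z₁ hz₁
  obtain ⟨ε, hε, hball⟩ := nhds_basis_closedBall.mem_iff.1 (hU.mem_nhds hz₁)
  obtain ⟨M, hM⟩ :=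
    (isCompact_closedBall z₁ ε).exists_bound_of_continuousOn (hf.continuousOn.mono hball)
  have hhalf : closedBall z₁ (ε / 2) ⊆ U :=
    (closedBall_subset_closedBall (by linarith)).trans hball
  have hC : ∀ w ∈ closedBall z₁ (ε / 2), ‖fderiv ℂ f w‖ ≤ M / (ε / 2) := by
    intro w hw
    have hsub : closedBall w (ε / 2) ⊆ closedBall z₁ ε :=
      closedBall_subset_closedBall' (by linarith [mem_closedBall.1 hw])
    exact norm_fderiv_le_of_forall_mem_closedBall_norm_le (by positivity)
      (hf.mono (hsub.trans hball)) fun u hu => hM u (hsub hu)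
  set r := ε / (4 * (‖v‖ + 1))
  have hr : 0 < r := by positivity
  have hnear : ∀ z ∈ ball z₁ (ε / 4), ∀ ζ ∈ closedBall (0 : ℂ) r,
      z + ζ • v ∈ closedBall z₁ (ε / 2) := by
    intro z hz ζ hζ
    have hζv : ‖ζ • v‖ ≤ ε / 4 := by
      rw [mem_closedBall_zero_iff] at hζ
      calc ‖ζ • v‖ ≤ r * (‖v‖ + 1) := by rw [norm_smul]; gcongr; linarith
        _ = ε / 4 := by simp only [r]; field_simp
    rw [mem_closedBall, dist_eq_norm, add_sub_right_comm]
    linarith [norm_add_le (z - z₁) (ζ • v), mem_ball_iff_norm.1 hz]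
  have hrepr : (fun z => fderiv ℂ f z v) =ᶠ[𝓝 z₁] fun z => cderiv r (fun ζ => f (z + ζ • v)) 0 :=
    eventually_of_mem (ball_mem_nhds z₁ (by positivity)) fun z hz =>
      fderiv_apply_eq_cderiv hU hf hr fun ζ hζ => hhalf (hnear z hz ζ hζ)
  refine (DifferentiableAt.congr_of_eventuallyEq ?_ hrepr).differentiableWithinAt
  exact differentiableAt_cderiv_comp_add_smul hr (by positivity : 0 < ε / 4)
    (fun z hz ζ hζ => hf.differentiableAt
      (hU.mem_nhds (hhalf (hnear z hz ζ (sphere_subset_closedBall hζ)))))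
    (fun z hz ζ hζ => hC _ (hnear z hz ζ (sphere_subset_closedBall hζ)))

theorem DifferentiableOn.contDiffOn_of_isOpen [CompleteSpace F] [SecondCountableTopology F]
    [FiniteDimensional ℂ E] {U : Set E} (hf : DifferentiableOn ℂ f U) (hU : IsOpen U) (n : ℕ) :
    ContDiffOn ℂ n f U := by
  induction n generalizing f with
  | zero => simpa using hf.continuousOn
  | succ n ih =>
    refine contDiffOn_succ_of_fderiv_apply hf (fun h => absurd h (WithTop.natCast_ne_top n))
      fun v => ?_
    exact (ih (hf.fderiv_apply hU v)).congr fun z hz => by rw [fderivWithin_of_isOpen hU hz]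

end Holomorphic

theorem HasStrictFDerivAt.exists_mem_nhds_injOn {𝕜 E F : Type*} [NontriviallyNormedField 𝕜]
    [CompleteSpace 𝕜] [NormedAddCommGroup E] [NormedSpace 𝕜 E] [FiniteDimensional 𝕜 E]
    [NormedAddCommGroup F] [NormedSpace 𝕜 F] {f : E → F} {f' : E →L[𝕜] F} {a : E}
    (hf : HasStrictFDerivAt f f' a) (hf' : Injective f') : ∃ s ∈ 𝓝 a, InjOn f s := by
  obtain ⟨K, hK, hKf'⟩ :=
    (f' : E →ₗ[𝕜] F).exists_antilipschitzWith (LinearMap.ker_eq_bot.2 hf')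
  obtain ⟨s, hs, hfs⟩ := hf.approximates_deriv_on_nhds (c := (2 * K)⁻¹) (.inr (by positivity))
  refine ⟨s, hs, fun x hx y hy hxy => ?_⟩
  have hK' : (0 : ℝ) < K := hK
  have h : ‖x - y‖ ≤ ‖x - y‖ / 2 :=
    calc ‖x - y‖ ≤ K * ‖f' (x - y)‖ := hKf'.le_mul_norm (map_zero f') _
      _ = K * ‖f x - f y - f' (x - y)‖ := by rw [hxy, sub_self, zero_sub, norm_neg]
      _ ≤ K * ((2 * K)⁻¹ * ‖x - y‖) := by gcongr; exact_mod_cast hfs x hx y hy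
      _ = ‖x - y‖ / 2 := by push_cast; field_simp
  exact sub_eq_zero.1 (norm_le_zero_iff.1 (by linarith [norm_nonneg (x - y)]))

section CriticalPoint
variable {𝕜 E : Type*} [RCLike 𝕜] [NormedAddCommGroup E] [NormedSpace 𝕜 E]

def mixedSndFDeriv (Ψ : E × E → 𝕜) (z : E × E) : LinearMap.BilinForm 𝕜 E :=
  ((fderiv 𝕜 (fderiv 𝕜 Ψ) z).bilinearComp (inl 𝕜 E E) (inr 𝕜 E E)).toLinearMap₁₂

variable [FiniteDimensional 𝕜 E] {Ψ : E × E → 𝕜} {z₀ : E × E}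

theorem exists_mem_nhds_injOn_fst_fderiv_comp_inl (hΨ : ContDiffAt 𝕜 2 Ψ z₀)
    (hnd : (mixedSndFDeriv Ψ z₀).SeparatingLeft) :
    ∃ s ∈ 𝓝 z₀, InjOn (fun p : E × E => (p.1, (fderiv 𝕜 Ψ p).comp (inl 𝕜 E E))) s := by
  have hA := (hΨ.fderiv_right (m := 1) le_rfl).hasStrictFDerivAt one_ne_zero
  refine (hasStrictFDerivAt_fst.prodMk
    ((precomp 𝕜 (inl 𝕜 E E)).hasStrictFDerivAt.comp z₀ hA)).exists_mem_nhds_injOn ?_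
  rw [injective_iff_map_eq_zero]
  rintro ⟨ξ, η⟩ h
  simp only [ContinuousLinearMap.prod_apply, coe_fst', ContinuousLinearMap.comp_apply,
    precomp_apply, Prod.mk_eq_zero] at h
  obtain ⟨rfl, hη⟩ := h
  have hsymm := hΨ.isSymmSndFDerivAt (by simp)
  refine Prod.ext rfl ((LinearMap.BilinForm.Nondegenerate.ofSeparatingLeft hnd).2 η fun ξ => ?_)
  have := congr($hη ξ)
  simpa [mixedSndFDeriv, hsymm.eq (ξ, 0)] using this

theorem exists_mem_nhds_injOn_snd_fderiv_comp_inr (hΨ : ContDiffAt 𝕜 2 Ψ z₀)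
    (hnd : (mixedSndFDeriv Ψ z₀).SeparatingLeft) :
    ∃ s ∈ 𝓝 z₀, InjOn (fun p : E × E => (p.2, (fderiv 𝕜 Ψ p).comp (inr 𝕜 E E))) s := by
  have hA := (hΨ.fderiv_right (m := 1) le_rfl).hasStrictFDerivAt one_ne_zero
  refine (hasStrictFDerivAt_snd.prodMk
    ((precomp 𝕜 (inr 𝕜 E E)).hasStrictFDerivAt.comp z₀ hA)).exists_mem_nhds_injOn ?_
  rw [injective_iff_map_eq_zero]
  rintro ⟨ξ, η⟩ h
  simp only [ContinuousLinearMap.prod_apply, coe_snd', ContinuousLinearMap.comp_apply,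
    precomp_apply, Prod.mk_eq_zero] at h
  obtain ⟨rfl, hξ⟩ := h
  exact Prod.ext (hnd ξ fun η => congr($hξ η)) rfl

end CriticalPoint

section Phase

theorem DifferentiableAt.hasFDerivAt_comp_prodMk_left {𝕜 E F G : Type*}
    [NontriviallyNormedField 𝕜] [NormedAddCommGroup E] [NormedSpace 𝕜 E] [NormedAddCommGroup F]
    [NormedSpace 𝕜 F] [NormedAddCommGroup G] [NormedSpace 𝕜 G] {Ψ : E × F → G} {x : E} {y : F}
    (h : DifferentiableAt 𝕜 Ψ (x, y)) :
    HasFDerivAt (fun x' => Ψ (x', y)) ((fderiv 𝕜 Ψ (x, y)).comp (inl 𝕜 E F)) x :=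
  h.hasFDerivAt.comp x (hasFDerivAt_prodMk_left x y)

theorem DifferentiableAt.hasFDerivAt_comp_prodMk_right {𝕜 E F G : Type*}
    [NontriviallyNormedField 𝕜] [NormedAddCommGroup E] [NormedSpace 𝕜 E] [NormedAddCommGroup F]
    [NormedSpace 𝕜 F] [NormedAddCommGroup G] [NormedSpace 𝕜 G] {Ψ : E × F → G} {x : E} {y : F}
    (h : DifferentiableAt 𝕜 Ψ (x, y)) :
    HasFDerivAt (fun y' => Ψ (x, y')) ((fderiv 𝕜 Ψ (x, y)).comp (inr 𝕜 E F)) y :=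
  h.hasFDerivAt.comp y (hasFDerivAt_prodMk_right x y)

variable {n : ℕ} {Ψ : En n × En n → ℂ}

theorem phiF_self_left (y xt yt : En n) : phiF n Ψ y xt y yt = 0 := by
  unfold phiF; ring

theorem phiF_self_right (y xt x : En n) : phiF n Ψ y xt x xt = 0 := by
  unfold phiF; ring

theorem fderiv_phiF_fst {y xt x yt : En n} (h₁ : DifferentiableAt ℂ Ψ (x, yt))
    (h₂ : DifferentiableAt ℂ Ψ (x, xt)) :
    fderiv ℂ (fun x' => phiF n Ψ y xt x' yt) x =
      (fderiv ℂ Ψ (x, yt)).comp (inl ℂ _ _) - (fderiv ℂ Ψ (x, xt)).comp (inl ℂ _ _) :=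
  (((h₁.hasFDerivAt_comp_prodMk_left.sub h₂.hasFDerivAt_comp_prodMk_left).sub_const _).add_const
    _).fderiv

theorem fderiv_phiF_snd {y xt x yt : En n} (h₁ : DifferentiableAt ℂ Ψ (x, yt))
    (h₃ : DifferentiableAt ℂ Ψ (y, yt)) :
    fderiv ℂ (fun yt' => phiF n Ψ y xt x yt') yt =
      (fderiv ℂ Ψ (x, yt)).comp (inr ℂ _ _) - (fderiv ℂ Ψ (y, yt)).comp (inr ℂ _ _) :=
  (((h₁.hasFDerivAt_comp_prodMk_right.sub_const _).sub h₃.hasFDerivAt_comp_prodMk_right).add_const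
    _).fderiv

end Phase

/-- near `(x₀, conj x₀, x₀, conj x₀)` the partial derivatives of the phase
`φ(y, x̃; x, ỹ)` in `(x, ỹ)` vanish precisely when `x = y` and `ỹ = x̃`; i.e. the unique
critical point of `(x,ỹ) ↦ φ(y,x̃;x,ỹ)` is `(y, x̃)`, with critical value `0`. -/
theorem statement10 (n : ℕ)
    (x₀ : En n) (U : Set (En n × En n)) (hU : IsOpen U) (hmem : (x₀, conjV n x₀) ∈ U)
    (Ψ : En n × En n → ℂ) (hΨ : DifferentiableOn ℂ Ψ U)
    (hnd : ∀ ξ : En n,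
      (∀ η : En n, fderiv ℂ (fderiv ℂ Ψ) (x₀, conjV n x₀) (ξ, 0) (0, η) = 0) → ξ = 0) :
    ∃ N : Set (En n × En n × En n × En n), IsOpen N ∧
      (x₀, conjV n x₀, x₀, conjV n x₀) ∈ N ∧
      ∀ y xt x yt : En n, (y, xt, x, yt) ∈ N →
        ((fderiv ℂ (fun x' => phiF n Ψ y xt x' yt) x = 0 ∧
          fderiv ℂ (fun yt' => phiF n Ψ y xt x yt') yt = 0) ↔ (x = y ∧ yt = xt)) ∧
        phiF n Ψ y xt y xt = 0 := by
  have hΨ₂ : ContDiffAt ℂ 2 Ψ (x₀, conjV n x₀) :=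
    (hΨ.contDiffOn_of_isOpen hU 2).contDiffAt (hU.mem_nhds hmem)
  obtain ⟨s₁, hs₁, hinj₁⟩ := exists_mem_nhds_injOn_fst_fderiv_comp_inl hΨ₂ hnd
  obtain ⟨s₂, hs₂, hinj₂⟩ := exists_mem_nhds_injOn_snd_fderiv_comp_inr hΨ₂ hnd
  obtain ⟨S, hSsub, hSopen, hz₀S⟩ :=
    _root_.mem_nhds_iff.1 (inter_mem (inter_mem (hU.mem_nhds hmem) hs₁) hs₂)
  refine ⟨{q | (q.2.2.1, q.2.2.2) ∈ S ∧ (q.2.2.1, q.2.1) ∈ S ∧ (q.1, q.2.2.2) ∈ S},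
    (hSopen.preimage (by fun_prop)).inter
      ((hSopen.preimage (by fun_prop)).inter (hSopen.preimage (by fun_prop))),
    ⟨hz₀S, hz₀S, hz₀S⟩, ?_⟩
  rintro y xt x yt ⟨h₁, h₂, h₃⟩
  have hd : ∀ p ∈ S, DifferentiableAt ℂ Ψ p := fun p hp =>
    hΨ.differentiableAt (hU.mem_nhds (hSsub hp).1.1)
  refine ⟨⟨fun ⟨hx, hyt⟩ => ?_, ?_⟩, phiF_self_left y xt xt⟩
  · rw [fderiv_phiF_fst (hd _ h₁) (hd _ h₂), sub_eq_zero] at hx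
    rw [fderiv_phiF_snd (hd _ h₁) (hd _ h₃), sub_eq_zero] at hyt
    have e₁ : (x, yt) = (x, xt) := hinj₁ (hSsub h₁).1.2 (hSsub h₂).1.2 (Prod.ext rfl hx)
    have e₂ : (x, yt) = (y, yt) := hinj₂ (hSsub h₁).2 (hSsub h₃).2 (Prod.ext rfl hyt)
    exact ⟨congr_arg Prod.fst e₂, congr_arg Prod.snd e₁⟩
  · rintro ⟨rfl, rfl⟩
    simp [phiF_self_left, phiF_self_right]

end
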